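/- arXiv:1807.11139 — 4 statements merged into one kernel-verified Lean document; each statement's English description precedes it below -/
import Mathlib

section
/- Let m, N be natural numbers, let A be an m × N matrix of integers and c a vector of m integers. If the system of m linear inequalities ∑_{i} A j i · x i ≤ c j (for j = 1, …, m) has a solution x ∈ ℝ^N with all entries nonnegative, then it has a nonnegative solution y ∈ ℝ^N in which at most m of the entries y i are nonzero. -/
open Finset

lemma reduce_support (m N : ℕ) (A : Fin m → Fin N → ℤ)
    (x : Fin N → ℝ) (hx_nonneg : ∀ i, 0 ≤ x i)
    (hcard : m < (Finset.univ.filter fun i => x i ≠ 0).card) :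
    ∃ y : Fin N → ℝ, (∀ i, 0 ≤ y i) ∧
      (∀ j, ∑ i, (A j i : ℝ) * y i = ∑ i, (A j i : ℝ) * x i) ∧
      (Finset.univ.filter fun i => y i ≠ 0).card
        < (Finset.univ.filter fun i => x i ≠ 0).card := by
  set s : Finset (Fin N) := Finset.univ.filter fun i => x i ≠ 0 with hs
  -- the columns of A restricted to s are linearly dependent
  have hdep : ¬ LinearIndependent ℝ (fun i : s => fun j : Fin m => (A j i : ℝ)) := by
    intro h
    have := h.fintype_card_le_finrank
    rw [Module.finrank_fin_fun] at this
    simp [Fintype.card_coe] at this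
    omega
  obtain ⟨g, hgsum, i₁, hi₁⟩ := Fintype.not_linearIndependent_iff.mp hdep
  -- extend to d₀ on Fin N
  set d₀ : Fin N → ℝ := fun i => if h : i ∈ s then g ⟨i, h⟩ else 0 with hd₀
  have hd₀sum : ∀ j, ∑ i, d₀ i * (A j i : ℝ) = 0 := by
    intro j
    have h1 := congrFun hgsum j
    simp only [Finset.sum_apply, Pi.smul_apply, smul_eq_mul, Pi.zero_apply] at h1
    rw [← Finset.sum_filter_of_ne (p := fun i => i ∈ s) (by
      intro i _ hne
      by_contra hmem
      exact hne (by simp [hd₀, hmem, zero_mul]))]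
    rw [Finset.filter_mem_eq_inter, Finset.univ_inter]
    rw [← Finset.sum_attach s (fun i => d₀ i * (A j i : ℝ))]
    rw [← h1]
    apply Finset.sum_congr rfl
    intro i _
    simp [hd₀, i.2]
  have hd₀supp : ∀ i, d₀ i ≠ 0 → x i ≠ 0 := by
    intro i hdi
    by_contra hxi
    apply hdi
    have : i ∉ s := by simp [hs, hxi]
    simp [hd₀, this]
  have hd₀ne : d₀ (i₁ : Fin N) ≠ 0 := by simpa [hd₀, i₁.2] using hi₁
  -- choose sign so that some entry is negative
  obtain ⟨d, hdsum, hdsupp, hdneg⟩ :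
      ∃ d : Fin N → ℝ, (∀ j, ∑ i, d i * (A j i : ℝ) = 0) ∧
        (∀ i, d i ≠ 0 → x i ≠ 0) ∧ ∃ i, d i < 0 := by
    rcases lt_or_gt_of_ne hd₀ne with h | h
    · exact ⟨d₀, hd₀sum, hd₀supp, ⟨i₁, h⟩⟩
    · refine ⟨-d₀, ?_, ?_, ⟨i₁, by simpa using h⟩⟩
      · intro j; simp [neg_mul, Finset.sum_neg_distrib, hd₀sum j]
      · intro i hi; exact hd₀supp i (by simpa using hi)
  set T : Finset (Fin N) := Finset.univ.filter fun i => d i < 0 with hT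
  have hTne : T.Nonempty := ⟨hdneg.choose, by simp [hT, hdneg.choose_spec]⟩
  set t : ℝ := T.inf' hTne (fun i => x i / (-d i)) with ht
  obtain ⟨i₀, hi₀T, hi₀⟩ := Finset.exists_mem_eq_inf' hTne (fun i => x i / (-d i))
  have hi₀neg : d i₀ < 0 := by simpa [hT] using hi₀T
  have ht_nonneg : 0 ≤ t := by
    apply Finset.le_inf'
    intro i hi
    have : d i < 0 := by simpa [hT] using hi
    exact div_nonneg (hx_nonneg i) (by linarith)
  refine ⟨fun i => x i + t * d i, ?_, ?_, ?_⟩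
  · intro i
    show 0 ≤ x i + t * d i
    rcases le_or_gt 0 (d i) with h | h
    · have := mul_nonneg ht_nonneg h; linarith [hx_nonneg i]
    · have hle : t ≤ x i / (-d i) := Finset.inf'_le _ (by simp [hT, h])
      have : t * (-d i) ≤ x i := by
        rw [← le_div_iff₀ (by linarith)]; exact hle
      nlinarith
  · intro j
    rw [show ∑ i, (A j i : ℝ) * (x i + t * d i)
        = (∑ i, (A j i : ℝ) * x i) + t * ∑ i, d i * (A j i : ℝ) by
      rw [Finset.mul_sum, ← Finset.sum_add_distrib]; apply Finset.sum_congr rfl; intros; ring]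
    rw [hdsum j]; ring
  · apply Finset.card_lt_card
    constructor
    · intro i hi
      simp only [Finset.mem_filter, Finset.mem_univ, true_and] at hi ⊢
      rw [hs, Finset.mem_filter]
      refine ⟨Finset.mem_univ i, fun hxi => hi ?_⟩
      have hdi : d i = 0 := by
        by_contra h; exact hdsupp i h hxi
      simp [hxi, hdi]
    · intro hsub
      have hy0 : x i₀ + t * d i₀ = 0 := by
        have htv : t = x i₀ / (-d i₀) := hi₀
        have hdne : d i₀ ≠ 0 := ne_of_lt hi₀neg
        rw [htv, div_mul_eq_mul_div, mul_comm, ← div_mul_eq_mul_div,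
          div_neg, div_self hdne]
        ring
      have hx0 : x i₀ ≠ 0 := hdsupp i₀ (ne_of_lt hi₀neg)
      have := hsub (by rw [hs]; simp [hx0] : i₀ ∈ s)
      simp only [Finset.mem_filter, Finset.mem_univ, true_and] at this
      exact this hy0

lemma aux_small_support (m N : ℕ) (A : Fin m → Fin N → ℤ) :
    ∀ k (x : Fin N → ℝ), (∀ i, 0 ≤ x i) →
      (Finset.univ.filter fun i => x i ≠ 0).card ≤ k →
      ∃ y : Fin N → ℝ, (∀ i, 0 ≤ y i) ∧
        (∀ j, ∑ i, (A j i : ℝ) * y i = ∑ i, (A j i : ℝ) * x i) ∧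
        (Finset.univ.filter fun i => y i ≠ 0).card ≤ m := by
  intro k
  induction k with
  | zero => exact fun x h1 h2 => ⟨x, h1, fun _ => rfl, h2.trans (Nat.zero_le m)⟩
  | succ k ih =>
    intro x h1 h2
    rcases le_or_gt ((Finset.univ.filter fun i => x i ≠ 0).card) m with h | h
    · exact ⟨x, h1, fun _ => rfl, h⟩
    · obtain ⟨y, hy1, hy2, hy3⟩ := reduce_support m N A x h1 h
      obtain ⟨z, hz1, hz2, hz3⟩ := ih y hy1 (by omega)
      exact ⟨z, hz1, fun j => (hz2 j).trans (hy2 j), hz3⟩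

/-- If a system of `m` linear inequalities `∑ i, A j i * x i ≤ c j` with integer
coefficients has a nonnegative real solution, then it has a nonnegative real solution
with at most `m` nonzero entries. -/
theorem nonneg_solution_with_small_support
    (m N : ℕ) (A : Fin m → Fin N → ℤ) (c : Fin m → ℤ)
    (x : Fin N → ℝ) (hx_nonneg : ∀ i, 0 ≤ x i)
    (hx_sol : ∀ j, ∑ i, (A j i : ℝ) * x i ≤ (c j : ℝ)) :
    ∃ y : Fin N → ℝ, (∀ i, 0 ≤ y i) ∧
      (∀ j, ∑ i, (A j i : ℝ) * y i ≤ (c j : ℝ)) ∧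
      (Finset.univ.filter fun i => y i ≠ 0).card ≤ m := by
  obtain ⟨y, h1, h2, h3⟩ := aux_small_support m N A
    ((Finset.univ.filter fun i => x i ≠ 0).card) x hx_nonneg le_rfl
  exact ⟨y, h1, fun j => (h2 j).le.trans (hx_sol j), h3⟩
end

section
/- There exists a constant k ∈ ℕ such that the following holds: for all m, N ≥ 1, every system of m linear inequalities ∑_i A j i · x i ≤ c j with integer coefficients all of absolute value at most L (where L ≥ 2) that has a nonnegative real solution also has a nonnegative rational solution y in which at most m entries are nonzero and in which every entry y i, written in lowest terms, has numerator and denominator of absolute value at most (m · L)^(k · m). -/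
/-!
Among the feasible points of `0 ≤ x, A x ≤ c`, take one whose slack vector `(x, c - A x)` has
minimal support. It is a basic solution: a nonzero direction `v` vanishing off the support of `x`
and with `A v` vanishing on the tight rows would allow a move `x + t v` (ratio test) that zeroes
one more slack coordinate. Hence, with `S` the support of `x` and `T` its tight rows, the integer
matrix `B = A[T, S]` is injective and `B x_S = c_T`, so `|S| ≤ |T| ≤ m`. The normal equations
`Bᵀ B x_S = Bᵀ c_T` are square and invertible with integer entries at most `m L²`, and Cramer's
rule writes each `x i` as a quotient of determinants of absolute value at most
`m! (m L²)^m ≤ (m L)^(2m)`.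
-/

open Finset Function Matrix

section RatioTest

variable {ι K : Type*} [Fintype ι] [Field K] [LinearOrder K] [IsStrictOrderedRing K]

-- The step is `t = min {a k / -b k | b k < 0}`.
theorem exists_nonneg_add_smul_support_ssubset_of_neg {a b : ι → K} (ha : 0 ≤ a)
    (hab : support b ⊆ support a) (hb : ∃ k, b k < 0) :
    ∃ t : K, 0 ≤ a + t • b ∧ support (a + t • b) ⊂ support a := by
  obtain ⟨k₀, hk₀, hmin⟩ := exists_min_image {k | b k < 0} (fun k => a k / -b k)
    (by simpa [Finset.Nonempty] using hb)
  rw [mem_filter_univ] at hk₀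
  set t := a k₀ / -b k₀
  have ht : 0 ≤ t := div_nonneg (ha k₀) (by linarith)
  have hsub : support (a + t • b) ⊆ support a := fun k hk h0 => by
    have : b k = 0 := notMem_support.1 fun h => (hab h) h0
    simp_all
  refine ⟨t, fun k => ?_, (Set.ssubset_iff_of_subset hsub).2 ⟨k₀, hab hk₀.ne, ?_⟩⟩
  · rcases lt_or_ge (b k) 0 with hk | hk
    · have := (le_div_iff₀ (neg_pos.2 hk)).1 (hmin k (mem_filter_univ _ |>.2 hk))
      simp only [Pi.add_apply, Pi.smul_apply, smul_eq_mul, Pi.zero_apply]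
      linarith
    · simpa using add_nonneg (ha k) (mul_nonneg ht hk)
  · simp only [mem_support, Pi.add_apply, Pi.smul_apply, smul_eq_mul, not_not, t]
    rw [div_mul_eq_mul_div, div_neg, mul_div_cancel_right₀ _ hk₀.ne, add_neg_cancel]

theorem exists_nonneg_add_smul_support_ssubset {a b : ι → K} (ha : 0 ≤ a) (hb : b ≠ 0)
    (hab : support b ⊆ support a) :
    ∃ t : K, 0 ≤ a + t • b ∧ support (a + t • b) ⊂ support a := by
  obtain ⟨k, hk⟩ := ne_iff.1 hb
  rcases (hk : b k ≠ 0).lt_or_gt with hk | hk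
  · exact exists_nonneg_add_smul_support_ssubset_of_neg ha hab ⟨k, hk⟩
  · obtain ⟨t, ht⟩ := exists_nonneg_add_smul_support_ssubset_of_neg (b := -b) ha
      (by rwa [support_neg]) ⟨k, by simpa using hk⟩
    exact ⟨-t, by simpa using ht⟩

end RatioTest

namespace Matrix

variable {ι κ K : Type*} [Fintype κ]

theorem submatrix_mulVec_of_support_subset {τ R : Type*} [CommSemiring R] (B : Matrix ι κ R)
    (r : τ → ι) {S : Finset κ} {x : κ → R} (hx : support x ⊆ S) :
    B.submatrix r ((↑) : S → κ) *ᵥ (fun s => x s) = fun t => (B *ᵥ x) (r t) := by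
  ext t
  simp only [mulVec, dotProduct, submatrix_apply]
  rw [sum_coe_sort S fun i => B (r t) i * x i]
  exact sum_subset (subset_univ S) fun i _ hi => by
    rw [notMem_support.1 fun h => hi (hx h), mul_zero]

section CommRing

variable [CommRing K]

def slack (A : Matrix ι κ K) (c : ι → K) (x : κ → K) : κ ⊕ ι → K :=
  Sum.elim x (c - A *ᵥ x)

variable {A : Matrix ι κ K} {c : ι → K}

theorem slack_nonneg_iff [PartialOrder K] [IsOrderedAddMonoid K] {x : κ → K} :
    0 ≤ slack A c x ↔ 0 ≤ x ∧ A *ᵥ x ≤ c := by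
  rw [slack, ← Sum.elim_zero_zero, Sum.elim_le_elim_iff, sub_nonneg]

theorem slack_add_smul (x v : κ → K) (t : K) :
    slack A c (x + t • v) = slack A c x + t • Sum.elim v (-(A *ᵥ v)) := by
  ext (i | j) <;> simp [slack, mulVec_add, mulVec_smul]
  ring

/-- The constraints of `0 ≤ x, A x ≤ c` active at `x` (rows with `(A x) j = c j`, coordinates
with `x i = 0`) have normals spanning `κ → K`: no nonzero `v` is orthogonal to all of them. -/
def IsBasicSolution (A : Matrix ι κ K) (c : ι → K) (x : κ → K) : Prop :=
  ∀ v : κ → K, support v ⊆ support x → (∀ j, (A *ᵥ x) j = c j → (A *ᵥ v) j = 0) → v = 0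

theorem IsBasicSolution.injective_mulVec_submatrix [Fintype ι] [DecidableEq K] {x : κ → K}
    (hx : IsBasicSolution A c x) :
    Injective (A.submatrix ((↑) : ({j | (A *ᵥ x) j = c j} : Finset ι) → ι)
      ((↑) : ({i | x i ≠ 0} : Finset κ) → κ)).mulVec := by
  set S : Finset κ := {i | x i ≠ 0}
  set T : Finset ι := {j | (A *ᵥ x) j = c j}
  intro w₁ w₂ hw
  set v : κ → K := extend Subtype.val (w₁ - w₂) 0
  have hvw : (fun s : S => v s) = w₁ - w₂ :=
    funext fun s => Subtype.val_injective.extend_apply (w₁ - w₂) 0 s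
  have hvS : support v ⊆ S := fun i hi => by_contra fun hiS =>
    hi (extend_apply' _ _ _ fun ⟨s, hs⟩ => hiS (hs ▸ s.2))
  have hv : v = 0 := hx v (hvS.trans fun i hi => by simpa [S] using hi) fun j hj => by
    have := congr_fun (submatrix_mulVec_of_support_subset A ((↑) : T → ι) hvS)
      ⟨j, by simpa [T] using hj⟩
    rwa [hvw, mulVec_sub, hw, sub_self, eq_comm] at this
  rw [← sub_eq_zero, ← hvw, hv]
  rfl

end CommRing

section Field

variable [Field K] {A : Matrix ι κ K} {c : ι → K}

theorem card_le_card_of_injective_mulVec {τ σ : Type*} [Fintype τ] [Fintype σ]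
    {B : Matrix τ σ K} (h : Injective B.mulVec) : Fintype.card σ ≤ Fintype.card τ := by
  simpa using LinearMap.finrank_le_finrank_of_injective (f := B.mulVecLin) h

theorem IsBasicSolution.card_support_le [Fintype ι] [DecidableEq K] {x : κ → K}
    (hx : IsBasicSolution A c x) : #{i | x i ≠ 0} ≤ Fintype.card ι := by
  have h := card_le_card_of_injective_mulVec hx.injective_mulVec_submatrix
  rw [Fintype.card_coe, Fintype.card_coe] at h
  exact h.trans (card_le_univ _)

variable [LinearOrder K] [IsStrictOrderedRing K]

theorem exists_isBasicSolution [Fintype ι] (h : ∃ x, 0 ≤ x ∧ A *ᵥ x ≤ c) :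
    ∃ x, 0 ≤ x ∧ A *ᵥ x ≤ c ∧ IsBasicSolution A c x := by
  simp_rw [← slack_nonneg_iff] at h
  obtain ⟨x, hx, hmin⟩ := (measure fun x => (support (slack A c x)).ncard).wf.has_min
    {x | 0 ≤ slack A c x} h
  obtain ⟨hx₀, hxc⟩ := slack_nonneg_iff.1 hx
  refine ⟨x, hx₀, hxc, fun v hvx hvA => by_contra fun hv => ?_⟩
  have hne : Sum.elim v (-(A *ᵥ v)) ≠ 0 := fun h0 => hv (funext fun i => congr_fun h0 (.inl i))
  have hsupp : support (Sum.elim v (-(A *ᵥ v))) ⊆ support (slack A c x) := by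
    rintro (i | j) hij
    · exact hvx hij
    · refine fun h0 => hij ?_
      simp_all [slack, sub_eq_zero]
  obtain ⟨t, ht, hlt⟩ := exists_nonneg_add_smul_support_ssubset hx hne hsupp
  rw [← slack_add_smul] at ht hlt
  exact hmin (x + t • v) ht (Set.ncard_lt_ncard hlt)

end Field

end Matrix

theorem Int.natAbs_dotProduct_le {τ : Type*} [Fintype τ] {a b : τ → ℤ} {L : ℕ}
    (ha : ∀ t, (a t).natAbs ≤ L) (hb : ∀ t, (b t).natAbs ≤ L) :
    (a ⬝ᵥ b).natAbs ≤ Fintype.card τ * (L * L) :=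
  (Int.natAbs_sum_le _ _).trans <| (sum_le_card_nsmul _ _ _ fun t _ => by
    rw [Int.natAbs_mul]; exact Nat.mul_le_mul (ha t) (hb t)).trans_eq (by simp)

theorem Matrix.natAbs_det_le {n : Type*} [Fintype n] [DecidableEq n] {M : Matrix n n ℤ} {L : ℕ}
    (h : ∀ i j, (M i j).natAbs ≤ L) :
    M.det.natAbs ≤ (Fintype.card n).factorial * L ^ Fintype.card n := by
  have := det_le (abv := AbsoluteValue.abs) fun i j => (Int.abs_eq_natAbs (M i j)).trans_le
    (Int.ofNat_le.2 (h i j))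
  rw [AbsoluteValue.abs_apply, Int.abs_eq_natAbs, nsmul_eq_mul] at this
  exact_mod_cast this

theorem Matrix.map_det_mul_eq_map_det_updateCol {n R S : Type*} [Fintype n] [DecidableEq n]
    [CommRing R] [CommRing S] (f : R →+* S) {M : Matrix n n R} {b : n → R} {v : n → S}
    (hv : M.map f *ᵥ v = f ∘ b) (i : n) : f M.det * v i = f (M.updateCol i b).det := by
  have h := congr_fun (cramer_eq_adjugate_mulVec (M.map f) (f ∘ b)) i
  rw [cramer_apply, ← map_updateCol, ← hv, mulVec_mulVec, adjugate_mul, smul_mulVec,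
    one_mulVec] at h
  rw [RingHom.map_det, RingHom.map_det]
  exact h.symm

theorem Rat.exists_cast_eq_of_mul_eq {K : Type*} [Field K] [CharZero K] {p d : ℤ} (hd : d ≠ 0)
    {r : K} (h : d * r = p) :
    ∃ q : ℚ, (q : K) = r ∧ q.num.natAbs ≤ p.natAbs ∧ q.den ≤ d.natAbs := by
  refine ⟨Rat.divInt p d, ?_, ?_, ?_⟩
  · rw [Rat.cast_divInt, ← h, mul_div_cancel_left₀ _ (Int.cast_ne_zero.2 hd)]
  · rcases eq_or_ne p 0 with rfl | hp
    · simp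
    · exact Int.natAbs_le_of_dvd_ne_zero (Rat.num_dvd p hd) hp
  · exact Int.natAbs_le_of_dvd_ne_zero (Rat.den_dvd p d) hd

theorem Matrix.exists_rat_eq_of_mulVec_eq {τ σ K : Type*} [Fintype τ] [Fintype σ] [DecidableEq σ]
    [Field K] [LinearOrder K] [IsStrictOrderedRing K] {B : Matrix τ σ ℤ} {d : τ → ℤ} {L : ℕ}
    (hB : ∀ t s, (B t s).natAbs ≤ L) (hd : ∀ t, (d t).natAbs ≤ L)
    (hinj : Injective (B.map ((↑) : ℤ → K)).mulVec) {v : σ → K}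
    (hv : B.map (↑) *ᵥ v = fun t => (d t : K)) (s : σ) :
    ∃ q : ℚ, (q : K) = v s ∧
      q.num.natAbs ≤ (Fintype.card σ).factorial * (Fintype.card τ * (L * L)) ^ Fintype.card σ ∧
      q.den ≤ (Fintype.card σ).factorial * (Fintype.card τ * (L * L)) ^ Fintype.card σ := by
  set f := Int.castRingHom K
  have hmap : (Bᵀ * B).map f = (B.map f)ᵀ * B.map f := by
    rw [Matrix.map_mul, transpose_map]
  have hnormal : (Bᵀ * B).map f *ᵥ v = f ∘ (Bᵀ *ᵥ d) := by
    ext t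
    rw [hmap, ← mulVec_mulVec, ← transpose_map]
    exact (congrArg (fun w => (Bᵀ.map f *ᵥ w) t) hv).trans (RingHom.map_mulVec f Bᵀ d t).symm
  have hdet : (Bᵀ * B).det ≠ 0 := by
    have hunit : IsUnit ((Bᵀ * B).map f) := by
      rw [← mulVec_injective_iff_isUnit, hmap, ← coe_mulVecLin, ← LinearMap.ker_eq_bot,
        ker_mulVecLin_transpose_mul_self, LinearMap.ker_eq_bot, coe_mulVecLin]
      exact hinj
    rw [isUnit_iff_isUnit_det, ← RingHom.mapMatrix_apply, ← RingHom.map_det] at hunit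
    exact fun h0 => by simp [h0] at hunit
  have hgram : ∀ i j, ((Bᵀ * B) i j).natAbs ≤ Fintype.card τ * (L * L) := fun i j =>
    Int.natAbs_dotProduct_le (hB · i) (hB · j)
  obtain ⟨q, hq, hnum, hden⟩ :=
    Rat.exists_cast_eq_of_mul_eq hdet (map_det_mul_eq_map_det_updateCol f hnormal s)
  refine ⟨q, hq, hnum.trans (natAbs_det_le fun i j => ?_), hden.trans (natAbs_det_le hgram)⟩
  rw [updateCol_apply]
  split_ifs
  exacts [Int.natAbs_dotProduct_le (hB · i) hd, hgram i j]

theorem Nat.factorial_mul_pow_le_pow {s t m L : ℕ} (hst : s ≤ t) (htm : t ≤ m) (hL : 1 ≤ L) :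
    s.factorial * (t * (L * L)) ^ s ≤ (m * L) ^ (2 * m) := by
  rcases Nat.eq_zero_or_pos m with rfl | hm
  · simp [Nat.le_zero.1 (hst.trans htm)]
  calc s.factorial * (t * (L * L)) ^ s ≤ m ^ s * (m * (L * L)) ^ s :=
        Nat.mul_le_mul ((Nat.factorial_le_pow s).trans (Nat.pow_le_pow_left (hst.trans htm) s))
          (Nat.pow_le_pow_left (Nat.mul_le_mul_right _ htm) s)
    _ = (m * L) ^ (2 * s) := by ring
    _ ≤ (m * L) ^ (2 * m) := pow_le_pow_right₀ (Nat.one_le_iff_ne_zero.2 (by positivity))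
        (by omega)

theorem Matrix.IsBasicSolution.exists_rat_eq {ι κ K : Type*} [Fintype ι] [Fintype κ] [Field K]
    [LinearOrder K] [IsStrictOrderedRing K] {A : Matrix ι κ ℤ} {c : ι → ℤ} {L : ℕ} (hL : 1 ≤ L)
    (hA : ∀ j i, (A j i).natAbs ≤ L) (hc : ∀ j, (c j).natAbs ≤ L) {x : κ → K}
    (hx : IsBasicSolution (A.map (↑)) (fun j => (c j : K)) x) (i : κ) :
    ∃ q : ℚ, (q : K) = x i ∧ q.num.natAbs ≤ (Fintype.card ι * L) ^ (2 * Fintype.card ι) ∧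
      q.den ≤ (Fintype.card ι * L) ^ (2 * Fintype.card ι) := by
  classical
  set S : Finset κ := {i | x i ≠ 0}
  set T : Finset ι := {j | (A.map (↑) *ᵥ x) j = c j}
  by_cases hi : x i = 0
  · refine ⟨0, by simp [hi], by simp, ?_⟩
    rcases Nat.eq_zero_or_pos (Fintype.card ι) with h | h
    · simp [h]
    · exact Nat.one_le_pow _ _ (by positivity)
  have hST : Fintype.card S ≤ Fintype.card T :=
    card_le_card_of_injective_mulVec hx.injective_mulVec_submatrix
  have hv := submatrix_mulVec_of_support_subset (A.map ((↑) : ℤ → K)) ((↑) : T → ι)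
    (S := S) (x := x) fun i hi => by simpa [S] using hi
  obtain ⟨q, hq, hnum, hden⟩ := exists_rat_eq_of_mulVec_eq
    (B := A.submatrix ((↑) : T → ι) ((↑) : S → κ)) (d := fun t => c t) (fun t s => hA t s) (fun t => hc t) hx.injective_mulVec_submatrix
    (hv.trans (funext fun t => (mem_filter_univ (t : ι)).1 t.2)) ⟨i, by simpa [S] using hi⟩
  have hbound := Nat.factorial_mul_pow_le_pow hST
    ((Fintype.card_coe T).trans_le (card_le_univ T)) hL
  exact ⟨q, hq, hnum.trans hbound, hden.trans hbound⟩

/-- There is a constant `k` such that any solvable system of `m ≥ 1` linear inequalities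
in `N ≥ 1` unknowns with integer coefficients of absolute value at most `L ≥ 2` having
a nonnegative real solution has a nonnegative rational solution with at most `m` nonzero
entries, each of which (in lowest terms) has numerator and denominator of absolute value
at most `(m * L) ^ (k * m)`. -/
theorem nonneg_solution_small_support_small_entries :
    ∃ k : ℕ, ∀ m N : ℕ, 1 ≤ m → 1 ≤ N → ∀ L : ℕ, 2 ≤ L →
      ∀ (A : Fin m → Fin N → ℤ) (c : Fin m → ℤ),
        (∀ j i, (A j i).natAbs ≤ L) → (∀ j, (c j).natAbs ≤ L) →
        (∃ x : Fin N → ℝ, (∀ i, 0 ≤ x i) ∧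
          ∀ j, ∑ i, (A j i : ℝ) * x i ≤ (c j : ℝ)) →
        ∃ y : Fin N → ℚ, (∀ i, 0 ≤ y i) ∧
          (∀ j, ∑ i, (A j i : ℚ) * y i ≤ (c j : ℚ)) ∧
          (Finset.univ.filter fun i => y i ≠ 0).card ≤ m ∧
          ∀ i, (y i).num.natAbs ≤ (m * L) ^ (k * m) ∧ (y i).den ≤ (m * L) ^ (k * m) := by
  refine ⟨2, fun m N _ _ L hL A c hA hc hsol => ?_⟩
  obtain ⟨x, hx₀, hxc, hx⟩ := exists_isBasicSolution (A := (of A).map ((↑) : ℤ → ℝ))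
    (c := fun j => (c j : ℝ)) hsol
  choose y hyx hy using hx.exists_rat_eq (by omega) hA hc
  refine ⟨y, fun i => ?_, fun j => ?_, ?_, by simpa using hy⟩
  · have h := hx₀ i
    rw [Pi.zero_apply, ← hyx] at h
    exact Rat.cast_nonneg.1 h
  · have h := hxc j
    simp only [mulVec, dotProduct, map_apply, of_apply, ← hyx] at h
    exact_mod_cast h
  · simpa [← hyx] using hx.card_support_le
end

section
/- Let m, m', N be natural numbers, let A : Fin m → Fin N → ℚ, c : Fin m → ℚ, B : Fin m' → Fin N → ℚ, d : Fin m' → ℚ be rational coefficient data. If there exists x ∈ ℝ^N such that ∑_i A j i · x i ≤ c j for all j and ∑_i B j i · x i < d j for all j, then there exists a rational vector y ∈ ℚ^N satisfying the same non-strict and strict inequalities. -/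
open Finset

/-- A rational linear system of *equations* with a real solution has a rational solution. -/
private lemma lemA {ι : Type*} [Fintype ι] [DecidableEq ι] {N : ℕ}
    (M : ι → Fin N → ℚ) (b : ι → ℚ)
    (h : ∃ x : Fin N → ℝ, ∀ j, ∑ i, (M j i : ℝ) * x i = (b j : ℝ)) :
    ∃ y : Fin N → ℚ, ∀ j, ∑ i, M j i * y i = b j := by
  obtain ⟨x, hx⟩ := h
  by_contra hc
  push_neg at hc
  let L : (Fin N → ℚ) →ₗ[ℚ] (ι → ℚ) :=
    { toFun := fun z j => ∑ i, M j i * z i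
      map_add' := by
        intro a b; funext j; simp [mul_add, Finset.sum_add_distrib]
      map_smul' := by
        intro r a; funext j; simp [Finset.mul_sum, mul_left_comm] }
  have hb : b ∉ LinearMap.range L := by
    rintro ⟨z, hz⟩
    obtain ⟨j, hj⟩ := hc z
    exact hj (congrFun hz j)
  obtain ⟨f, hfb, hker⟩ := Submodule.exists_dual_map_eq_bot_of_notMem hb inferInstance
  have hf0 : ∀ z : Fin N → ℚ, f (L z) = 0 := by
    intro z
    have : f (L z) ∈ Submodule.map f (LinearMap.range L) :=
      ⟨L z, ⟨z, rfl⟩, rfl⟩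
    rw [hker] at this
    simpa using this
  set y : ι → ℚ := fun j => f (fun j' => if j = j' then 1 else 0) with hy
  have key1 : ∀ i : Fin N, ∑ j, y j * M j i = 0 := by
    intro i
    have h0 := hf0 (fun i' => if i = i' then 1 else 0)
    rw [LinearMap.pi_apply_eq_sum_univ] at h0
    have hLe : ∀ j, L (fun i' => if i = i' then 1 else 0) j = M j i := by
      intro j
      simp [L, mul_ite, Finset.sum_ite_eq]
    calc ∑ j, y j * M j i = ∑ j, L (fun i' => if i = i' then 1 else 0) j • y j := by
          refine Finset.sum_congr rfl fun j _ => ?_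
          rw [hLe j, smul_eq_mul, mul_comm]
      _ = 0 := h0
  have key2 : ∑ j, y j * b j ≠ 0 := by
    have hfb2 : f b = ∑ j, y j * b j := by
      rw [LinearMap.pi_apply_eq_sum_univ f b]
      refine Finset.sum_congr rfl fun j _ => ?_
      rw [smul_eq_mul, mul_comm]
    intro h0
    exact hfb (hfb2.trans h0)
  -- contradiction over ℝ
  have hreal : ((∑ j, y j * b j : ℚ) : ℝ) = 0 := by
    push_cast
    calc ∑ j, (y j : ℝ) * (b j : ℝ)
        = ∑ j, (y j : ℝ) * ∑ i, (M j i : ℝ) * x i := by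
          refine Finset.sum_congr rfl fun j _ => by rw [hx j]
      _ = ∑ j, ∑ i, (y j : ℝ) * M j i * x i := by
          refine Finset.sum_congr rfl fun j _ => by
            rw [Finset.mul_sum]; exact Finset.sum_congr rfl fun i _ => by ring
      _ = ∑ i, ∑ j, (y j : ℝ) * M j i * x i := Finset.sum_comm
      _ = ∑ i, (∑ j, (y j : ℝ) * M j i) * x i := by
          refine Finset.sum_congr rfl fun i _ => by rw [Finset.sum_mul]
      _ = 0 := by
          refine Finset.sum_eq_zero fun i _ => ?_
          have : (∑ j, (y j : ℝ) * M j i) = ((∑ j, y j * M j i : ℚ) : ℝ) := by push_cast; rfl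
          rw [this, key1 i]
          simp
  exact key2 (by exact_mod_cast hreal)

/-- A rational system of non-strict linear inequalities with a real solution has a
rational solution. -/
private lemma lemNS {ι : Type*} [Fintype ι] [DecidableEq ι] {N : ℕ}
    (M : ι → Fin N → ℚ) (b : ι → ℚ)
    (h : ∃ x : Fin N → ℝ, ∀ j, ∑ i, (M j i : ℝ) * x i ≤ (b j : ℝ)) :
    ∃ y : Fin N → ℚ, ∀ j, ∑ i, M j i * y i ≤ b j := by
  classical
  set Sol : (Fin N → ℝ) → Prop := fun z => ∀ j, ∑ i, (M j i : ℝ) * z i ≤ (b j : ℝ) with hSol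
  set J : (Fin N → ℝ) → Finset ι :=
    fun z => Finset.univ.filter (fun j => ∑ i, (M j i : ℝ) * z i = (b j : ℝ)) with hJ
  obtain ⟨x0, hx0⟩ := h
  -- choose a solution with maximal tight set
  set C : Set ℕ := {k | ∃ z, Sol z ∧ (J z).card = k} with hC
  have hCne : C.Nonempty := ⟨(J x0).card, x0, hx0, rfl⟩
  have hCbdd : BddAbove C := by
    refine ⟨Fintype.card ι, ?_⟩
    rintro k ⟨z, _, rfl⟩
    exact Finset.card_le_card (Finset.subset_univ _) |>.trans_eq (Finset.card_univ)
  obtain ⟨x, hx, hcard⟩ : ∃ z, Sol z ∧ (J z).card = sSup C := Nat.sSup_mem hCne hCbdd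
  have hmax : ∀ z, Sol z → (J z).card ≤ (J x).card := by
    intro z hz
    rw [hcard]
    exact le_csSup hCbdd ⟨z, hz, rfl⟩
  -- rational solution of the tight subsystem
  obtain ⟨y, hyeq⟩ := lemA (ι := {j // j ∈ J x}) (fun j => M j.1) (fun j => b j.1)
    ⟨x, fun j => by
      have hj := j.2
      simp only [hJ, Finset.mem_filter] at hj
      exact hj.2⟩
  refine ⟨y, fun j => ?_⟩
  by_contra hjy
  push_neg at hjy
  -- real data
  set r : ι → ℝ := fun j => ∑ i, (M j i : ℝ) * x i with hr
  set s : ι → ℝ := fun j => ∑ i, (M j i : ℝ) * (y i : ℝ) with hs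
  have hsq : ∀ j, s j = ((∑ i, M j i * y i : ℚ) : ℝ) := by
    intro j; rw [hs]; push_cast; rfl
  -- every j in the tight set satisfies the equation for y
  have hyJ : ∀ j ∈ J x, ∑ i, M j i * y i = b j := fun j hj => hyeq ⟨j, hj⟩
  set V : Finset ι := Finset.univ.filter (fun j => (b j : ℝ) < s j) with hV
  have hjV : j ∈ V := by
    rw [hV, Finset.mem_filter]
    exact ⟨Finset.mem_univ _, by rw [hsq]; exact_mod_cast hjy⟩
  have hVnJ : ∀ k ∈ V, k ∉ J x := by
    intro k hk hkJ
    rw [hV, Finset.mem_filter] at hk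
    have := hyJ k hkJ
    rw [hsq] at hk
    exact absurd (by exact_mod_cast hk.2) (not_lt.mpr (le_of_eq this))
  have hVr : ∀ k ∈ V, r k < b k := by
    intro k hk
    have h1 : r k ≤ b k := hx k
    rcases lt_or_eq_of_le h1 with h2 | h2
    · exact h2
    · exact absurd (by rw [hJ, Finset.mem_filter]; exact ⟨Finset.mem_univ _, h2⟩) (hVnJ k hk)
  have hVs : ∀ k ∈ V, (b k : ℝ) < s k := by
    intro k hk; rw [hV, Finset.mem_filter] at hk; exact hk.2
  obtain ⟨j₁, hj₁V, hj₁min⟩ :=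
    Finset.exists_min_image V (fun k => ((b k : ℝ) - r k) / (s k - r k)) ⟨j, hjV⟩
  set t : ℝ := ((b j₁ : ℝ) - r j₁) / (s j₁ - r j₁) with ht
  have hden : (0:ℝ) < s j₁ - r j₁ := by
    have := hVr j₁ hj₁V; have := hVs j₁ hj₁V; linarith
  have ht0 : 0 < t := div_pos (by have := hVr j₁ hj₁V; linarith) hden
  have ht1 : t < 1 := by
    rw [ht, div_lt_one hden]
    have := hVs j₁ hj₁V; linarith
  set x' : Fin N → ℝ := fun i => x i + t * ((y i : ℝ) - x i) with hx'
  have rowval : ∀ k, ∑ i, (M k i : ℝ) * x' i = r k + t * (s k - r k) := by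
    intro k
    rw [hr, hs, hx']
    rw [mul_sub, Finset.mul_sum, Finset.mul_sum, ← Finset.sum_sub_distrib,
      ← Finset.sum_add_distrib]
    refine Finset.sum_congr rfl fun i _ => by ring
  -- bound t on V
  have htle : ∀ k ∈ V, t * (s k - r k) ≤ (b k : ℝ) - r k := by
    intro k hk
    have hdk : (0:ℝ) < s k - r k := by
      have := hVr k hk; have := hVs k hk; linarith
    have := hj₁min k hk
    calc t * (s k - r k) ≤ (((b k : ℝ) - r k) / (s k - r k)) * (s k - r k) :=
          mul_le_mul_of_nonneg_right this (le_of_lt hdk)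
      _ = (b k : ℝ) - r k := div_mul_cancel₀ _ (ne_of_gt hdk)
  -- x' is a solution
  have hsolx' : Sol x' := by
    intro k
    show ∑ i, (M k i : ℝ) * x' i ≤ (b k : ℝ)
    rw [rowval k]
    by_cases hkV : k ∈ V
    · have := htle k hkV; linarith
    · have hsk : s k ≤ b k := by
        by_contra hsk
        exact hkV (by rw [hV, Finset.mem_filter]; exact ⟨Finset.mem_univ _, lt_of_not_ge hsk⟩)
      have hrk : r k ≤ b k := hx k
      nlinarith
  -- the tight set grows
  have hJsub : J x ⊆ J x' := by
    intro k hk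
    have hrk : r k = b k := by
      rw [hJ, Finset.mem_filter] at hk; exact hk.2
    have hsk : s k = b k := by
      rw [hsq]; exact_mod_cast hyJ k hk
    rw [hJ, Finset.mem_filter]
    refine ⟨Finset.mem_univ _, ?_⟩
    rw [rowval k, hrk, hsk]
    ring
  have hj₁x' : j₁ ∈ J x' := by
    rw [hJ, Finset.mem_filter]
    refine ⟨Finset.mem_univ _, ?_⟩
    rw [rowval j₁, ht, div_mul_cancel₀ _ (ne_of_gt hden)]
    ring
  have hlt : (J x).card < (J x').card :=
    Finset.card_lt_card ⟨hJsub, fun hsub => hVnJ j₁ hj₁V (hsub hj₁x')⟩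
  exact absurd (hmax x' hsolx') (not_le.mpr hlt)

/-- If a mixed system of non-strict and strict linear inequalities with rational
coefficients has a real solution, then it has a rational solution. -/
theorem rational_solution_of_real_solution
    (m m' N : ℕ) (A : Fin m → Fin N → ℚ) (c : Fin m → ℚ)
    (B : Fin m' → Fin N → ℚ) (d : Fin m' → ℚ)
    (h : ∃ x : Fin N → ℝ,
      (∀ j, ∑ i, (A j i : ℝ) * x i ≤ (c j : ℝ)) ∧
      (∀ j, ∑ i, (B j i : ℝ) * x i < (d j : ℝ))) :
    ∃ y : Fin N → ℚ,
      (∀ j, ∑ i, A j i * y i ≤ c j) ∧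
      (∀ j, ∑ i, B j i * y i < d j) := by
  obtain ⟨x, hA, hB⟩ := h
  -- positive slack for the strict part
  obtain ⟨δ, hδ0, hδ⟩ : ∃ δ : ℝ, 0 < δ ∧ ∀ j, ∑ i, (B j i : ℝ) * x i ≤ (d j : ℝ) - δ := by
    rcases isEmpty_or_nonempty (Fin m') with hm | hm
    · exact ⟨1, one_pos, fun j => hm.elim j⟩
    · obtain ⟨j₀, _, hj₀⟩ := Finset.exists_min_image Finset.univ
        (fun j => (d j : ℝ) - ∑ i, (B j i : ℝ) * x i) Finset.univ_nonempty
      refine ⟨(d j₀ : ℝ) - ∑ i, (B j₀ i : ℝ) * x i, by have := hB j₀; linarith, fun j => ?_⟩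
      have := hj₀ j (Finset.mem_univ j)
      linarith
  obtain ⟨ε, hε0, hεδ⟩ := exists_rat_btwn hδ0
  have hBε : ∀ j, ∑ i, (B j i : ℝ) * x i ≤ ((d j - ε : ℚ) : ℝ) := by
    intro j
    push_cast
    have := hδ j
    linarith
  obtain ⟨y, hy⟩ := lemNS (ι := Fin m ⊕ Fin m')
    (Sum.elim A B) (Sum.elim c (fun j => d j - ε))
    ⟨x, fun j => by cases j with
      | inl j => exact hA j
      | inr j => exact hBε j⟩
  refine ⟨y, fun j => hy (Sum.inl j), fun j => ?_⟩
  have := hy (Sum.inr j)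
  simp only [Sum.elim_inr] at this
  have hε0' : (0:ℚ) < ε := by exact_mod_cast hε0
  linarith
end

section
/- Let Ω = ℕ → Bool carry the product σ-algebra, and let μ be the product over ℕ of the uniform probability measure on Bool (the fair-coin measure). For every natural number b ≥ 1 there exists a measurable function f : Ω → Fin b such that the pushforward measure Measure.map f μ assigns measure 1/b to every singleton of Fin b, i.e., f draws a uniformly random number from 1 to b using fair coin flips. -/
open MeasureTheory

/-- `μ` is the fair-coin measure on `ℕ → Bool`: the product over `ℕ` of the uniform
(Bernoulli(1/2)) probability measure on `Bool`, characterized as the probability measure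
under which the coordinates are independent and each is a fair coin. -/
def IsFairCoinMeasure (μ : Measure (ℕ → Bool)) : Prop :=
  IsProbabilityMeasure μ ∧
  ProbabilityTheory.iIndepFun (fun i (r : ℕ → Bool) => r i) μ ∧
  ∀ i : ℕ, μ {r | r i = true} = 1 / 2

/-!
Rejection sampling. Regrouping the coin flips into consecutive blocks of `b` flips gives an
i.i.d. sequence of words, each uniform on the `2 ^ b ≥ b` words of length `b`. Fix `b` of those
words and output which of them the first block lying among them is: the first accepted block is
distributed as a single block conditioned on acceptance, which is uniform on the chosen words.
-/

open ProbabilityTheory Measure Set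

section RejectionSampling

variable {α : Type*}

open Classical in
/-- The first entry of `ω` lying in `A`. The fallback `ω 0` is a junk value, taken on an event that
is null under an i.i.d. law with `ρ A ≠ 0` (`infinitePi_forall_notMem`). -/
noncomputable def firstHit (A : Set α) (ω : ℕ → α) : α :=
  if h : ∃ n, ω n ∈ A then ω (Nat.find h) else ω 0

def firstHitAt (A : Set α) (n : ℕ) : Set (ℕ → α) := {ω | (∀ m < n, ω m ∉ A) ∧ ω n ∈ A}

lemma firstHitAt_disjoint (A : Set α) : Pairwise (Function.onFun Disjoint (firstHitAt A)) := by
  intro n m hnm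
  refine disjoint_left.2 fun ω ⟨hn, hnA⟩ ⟨hm, hmA⟩ => ?_
  rcases hnm.lt_or_gt with h | h
  exacts [hm n h hnA, hn m h hmA]

lemma preimage_firstHit (A B : Set α) :
    firstHit A ⁻¹' B =
      (⋃ n, firstHitAt A n ∩ (fun ω => ω n) ⁻¹' B) ∪
        ({ω | ∀ n, ω n ∉ A} ∩ (fun ω => ω 0) ⁻¹' B) := by
  classical
  ext ω
  simp only [firstHit, mem_preimage, mem_union, mem_iUnion, mem_inter_iff]
  split_ifs with h
  · have hfirst : ω ∈ firstHitAt A (Nat.find h) :=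
      ⟨fun m hm => Nat.find_min h hm, Nat.find_spec h⟩
    have hunique : ∀ n, ω ∈ firstHitAt A n → n = Nat.find h := fun n hn =>
      by_contra fun hne => firstHitAt_disjoint A hne |>.ne_of_mem hn hfirst rfl
    constructor
    · exact fun hB => .inl ⟨_, hfirst, hB⟩
    · rintro (⟨n, hn, hB⟩ | ⟨hnever, -⟩)
      · rwa [← hunique n hn]
      · exact absurd (Nat.find_spec h) (hnever _)
  · push Not at h
    simp [firstHitAt, h]

variable [MeasurableSpace α]

lemma measurableSet_firstHitAt {A : Set α} (hA : MeasurableSet A) (n : ℕ) :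
    MeasurableSet (firstHitAt A n) := by
  simp only [firstHitAt, ofPred_and, ofPred_forall]
  exact .inter (.iInter fun m => .iInter fun _ => (hA.preimage (measurable_pi_apply m)).compl)
    (hA.preimage (measurable_pi_apply n))

lemma measurableSet_forall_notMem {A : Set α} (hA : MeasurableSet A) :
    MeasurableSet {ω : ℕ → α | ∀ n, ω n ∉ A} := by
  simp only [ofPred_forall]
  exact .iInter fun n => (hA.preimage (measurable_pi_apply n)).compl

lemma measurable_firstHit {A : Set α} (hA : MeasurableSet A) : Measurable (firstHit A) := by
  intro B hB
  rw [preimage_firstHit]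
  exact (MeasurableSet.iUnion fun n => (measurableSet_firstHitAt hA n).inter
      (hB.preimage (measurable_pi_apply n))).union
    ((measurableSet_forall_notMem hA).inter (hB.preimage (measurable_pi_apply 0)))

variable (ρ : Measure α) [IsProbabilityMeasure ρ]

lemma infinitePi_firstHitAt_inter {A B : Set α} (hA : MeasurableSet A) (hB : MeasurableSet B)
    (n : ℕ) : infinitePi (fun _ => ρ) (firstHitAt A n ∩ (fun ω => ω n) ⁻¹' B) =
      ρ Aᶜ ^ n * ρ (A ∩ B) := by
  have hpi : firstHitAt A n ∩ (fun ω => ω n) ⁻¹' B =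
      (Finset.range (n + 1) : Set ℕ).pi fun m => if m < n then Aᶜ else A ∩ B := by
    ext ω
    simp only [firstHitAt, mem_inter_iff, mem_ofPred_eq, mem_preimage, mem_pi, Finset.coe_range,
      mem_Iio, Nat.lt_succ_iff_lt_or_eq, or_imp, forall_and, forall_eq, lt_irrefl, if_false]
    constructor
    · rintro ⟨⟨hlt, hA⟩, hB⟩
      exact ⟨fun m hm => by simpa [hm] using hlt m hm, hA, hB⟩
    · rintro ⟨hlt, hA, hB⟩
      exact ⟨⟨fun m hm => by simpa [hm] using hlt m hm, hA⟩, hB⟩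
  rw [hpi, infinitePi_pi _ fun m _ => by split_ifs; exacts [hA.compl, hA.inter hB],
    Finset.prod_range_succ, if_neg (lt_irrefl n),
    Finset.prod_congr rfl fun m hm => by rw [if_pos (Finset.mem_range.1 hm)], Finset.prod_const,
    Finset.card_range]

lemma infinitePi_forall_notMem {A : Set α} (hA : MeasurableSet A) (hρA : ρ A ≠ 0) :
    infinitePi (fun _ => ρ) {ω : ℕ → α | ∀ n, ω n ∉ A} = 0 := by
  have hle : ∀ n, infinitePi (fun _ => ρ) {ω : ℕ → α | ∀ n, ω n ∉ A} ≤ ρ Aᶜ ^ n := fun n =>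
    calc _ ≤ infinitePi (fun _ => ρ) ((Finset.range n : Set ℕ).pi fun _ => Aᶜ) :=
          measure_mono fun ω (hω : ∀ n, ω n ∉ A) m _ => hω m
      _ = ρ Aᶜ ^ n := by
          rw [infinitePi_pi _ fun _ _ => hA.compl, Finset.prod_const, Finset.card_range]
  have hlt : ρ Aᶜ < 1 := by
    rw [prob_compl_eq_one_sub hA]
    exact ENNReal.sub_lt_self ENNReal.one_ne_top one_ne_zero hρA
  exact le_antisymm (ge_of_tendsto' (ENNReal.tendsto_pow_atTop_nhds_zero_of_lt_one hlt) hle)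
    bot_le

theorem map_firstHit_infinitePi {A : Set α} (hA : MeasurableSet A) (hρA : ρ A ≠ 0) :
    (infinitePi fun _ => ρ).map (firstHit A) = ρ[|A] := by
  ext B hB
  have hnull : infinitePi (fun _ => ρ) ({ω | ∀ n, ω n ∉ A} ∩ (fun ω => ω 0) ⁻¹' B) = 0 :=
    measure_mono_null inter_subset_left (infinitePi_forall_notMem ρ hA hρA)
  rw [map_apply (measurable_firstHit hA) hB, preimage_firstHit,
    measure_congr (union_ae_eq_left_of_ae_eq_empty (ae_eq_empty.2 hnull)),
    measure_iUnion ?_ fun n => (measurableSet_firstHitAt hA n).inter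
      (hB.preimage (measurable_pi_apply n))]
  · simp_rw [infinitePi_firstHitAt_inter ρ hA hB]
    rw [ENNReal.tsum_mul_right, ENNReal.tsum_geometric, prob_compl_eq_one_sub hA,
      ENNReal.sub_sub_cancel ENNReal.one_ne_top prob_le_one, cond_apply hA]
  · exact fun n m hnm => (firstHitAt_disjoint A hnm).mono inter_subset_left inter_subset_left

end RejectionSampling

noncomputable def fairCoin : Measure Bool := (PMF.uniformOfFintype Bool).toMeasure

instance : IsProbabilityMeasure fairCoin := by
  unfold fairCoin; infer_instance

lemma fairCoin_singleton (x : Bool) : fairCoin {x} = 2⁻¹ := by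
  rw [fairCoin, PMF.toMeasure_apply_singleton _ _ (measurableSet_singleton x),
    PMF.uniformOfFintype_apply, Fintype.card_bool, Nat.cast_ofNat]

lemma IsFairCoinMeasure.map_eval {μ : Measure (ℕ → Bool)} (hμ : IsFairCoinMeasure μ) (i : ℕ) :
    μ.map (fun r => r i) = fairCoin := by
  obtain ⟨hprob, -, hhalf⟩ := hμ
  refine ext_of_singleton fun x => ?_
  rw [map_apply (measurable_pi_apply i) (measurableSet_singleton x), fairCoin_singleton]
  cases x
  · have hfalse : (fun r : ℕ → Bool => r i) ⁻¹' {false} = {r | r i = true}ᶜ := by ext; simp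
    rw [hfalse, prob_compl_eq_one_sub (measurableSet_eq_fun (measurable_pi_apply i)
      measurable_const), hhalf, one_div, ENNReal.one_sub_inv_two]
  · exact (hhalf i).trans (one_div 2)

lemma IsFairCoinMeasure.eq_infinitePi {μ : Measure (ℕ → Bool)} (hμ : IsFairCoinMeasure μ) :
    μ = infinitePi fun _ => fairCoin := by
  have := hμ.1
  have h := (iIndepFun_iff_map_fun_eq_infinitePi_map measurable_pi_apply).1 hμ.2.1
  simpa only [hμ.map_eval, map_id'] using h

lemma infinitePi_fairCoin_singleton {ι : Type*} [Fintype ι] (w : ι → Bool) :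
    infinitePi (fun _ : ι => fairCoin) {w} = 2⁻¹ ^ Fintype.card ι := by
  simp [fairCoin_singleton]

lemma infinitePi_map_curry_equiv {ι κ₁ κ₂ X : Type*} [MeasurableSpace X] (ρ : Measure X)
    [IsProbabilityMeasure ρ] (e : ι ≃ κ₁ × κ₂) :
    (infinitePi fun _ : ι => ρ).map (fun ω i j => ω (e.symm (i, j))) =
      infinitePi fun _ : κ₁ => infinitePi fun _ : κ₂ => ρ := by
  have hcomp : (fun (ω : ι → X) i j => ω (e.symm (i, j))) =
      MeasurableEquiv.curry κ₁ κ₂ X ∘ MeasurableEquiv.piCongrLeft (fun _ => X) e := by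
    ext ω i j
    simp [MeasurableEquiv.coe_piCongrLeft, Equiv.piCongrLeft_apply_eq_cast]
  rw [hcomp, ← map_map (by fun_prop) (by fun_prop),
    infinitePi_map_piCongrLeft (fun _ : κ₁ × κ₂ => ρ) e]
  exact infinitePi_map_curry fun _ _ => ρ

section UniformOnRange

variable {α β : Type*} [MeasurableSpace α] [MeasurableSingletonClass α] [Fintype β]
  {ρ : Measure α} {c : ENNReal}

lemma measure_range_embedding (hρ : ∀ x, ρ {x} = c) (f : β ↪ α) :
    ρ (range f) = Fintype.card β * c := by
  have hrange : range f = ↑(Finset.univ.map f) := by simp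
  rw [hrange, ← sum_measure_singleton, Finset.sum_map]
  simp [hρ]

lemma map_invFun_cond_range_singleton [Countable α] [MeasurableSpace β]
    [MeasurableSingletonClass β] [Nonempty β] (hρ : ∀ x, ρ {x} = c)
    (hc₀ : c ≠ 0) (hc : c ≠ ⊤) (f : β ↪ α) (k : β) :
    (ρ[|range f]).map (Function.invFun f) {k} = 1 / Fintype.card β := by
  have hfiber : range f ∩ Function.invFun f ⁻¹' {k} = {f k} := by
    ext x
    simp only [mem_inter_iff, mem_range, mem_preimage, mem_singleton_iff]
    constructor
    · rintro ⟨⟨j, rfl⟩, rfl⟩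
      rw [Function.leftInverse_invFun f.injective j]
    · rintro rfl
      exact ⟨⟨k, rfl⟩, Function.leftInverse_invFun f.injective k⟩
  rw [map_apply (measurable_of_countable _) (measurableSet_singleton k),
    cond_apply (finite_range f).measurableSet, hfiber, measure_range_embedding hρ, hρ,
    ENNReal.mul_inv (.inr hc) (.inr hc₀), mul_assoc, ENNReal.inv_mul_cancel hc₀ hc, mul_one,
    one_div]

end UniformOnRange

/-- From infinitely many independent fair coin flips one can sample uniformly from
`Fin b` for any `b ≥ 1`: there is a measurable `f : (ℕ → Bool) → Fin b` whose
pushforward assigns measure `1 / b` to every singleton. -/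
theorem exists_uniform_sampler
    (μ : Measure (ℕ → Bool)) (hμ : IsFairCoinMeasure μ)
    (b : ℕ) (hb : 1 ≤ b) :
    ∃ f : (ℕ → Bool) → Fin b, Measurable f ∧
      ∀ k : Fin b, Measure.map f μ {k} = 1 / (b : ENNReal) := by
  have : NeZero b := ⟨by omega⟩
  obtain ⟨enc⟩ : Nonempty (Fin b ↪ (Fin b → Bool)) :=
    Function.Embedding.nonempty_of_card_le (by simpa using Nat.lt_two_pow_self.le)
  let blocks : (ℕ → Bool) → ℕ → Fin b → Bool := fun ω t j => ω ((Nat.divModEquiv b).symm (t, j))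
  have hblocks : Measurable blocks := by fun_prop
  have hA : MeasurableSet (range enc) := (finite_range enc).measurableSet
  have hc₀ : (2⁻¹ : ENNReal) ^ Fintype.card (Fin b) ≠ 0 := by simp
  have hc : (2⁻¹ : ENNReal) ^ Fintype.card (Fin b) ≠ ⊤ := by simp
  have hρA : infinitePi (fun _ : Fin b => fairCoin) (range enc) ≠ 0 := by
    rw [measure_range_embedding infinitePi_fairCoin_singleton]
    exact mul_ne_zero (by simp [NeZero.ne b]) hc₀
  refine ⟨Function.invFun enc ∘ firstHit (range enc) ∘ blocks,
    (measurable_of_countable _).comp ((measurable_firstHit hA).comp hblocks), fun k => ?_⟩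
  rw [← map_map (measurable_of_countable _) ((measurable_firstHit hA).comp hblocks),
    ← map_map (measurable_firstHit hA) hblocks, hμ.eq_infinitePi, infinitePi_map_curry_equiv,
    map_firstHit_infinitePi _ hA hρA,
    map_invFun_cond_range_singleton infinitePi_fairCoin_singleton hc₀ hc, Fintype.card_fin]
end
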